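/- (Knuth–Wilf) Let p be an odd prime and let p* be the least positive integer n such that p divides F_n. Given natural numbers m and n, write m = p*·q_m + r_m and n = p*·q_n + r_n with 0 ≤ r_m, r_n < p*, and set c = 1 if r_m + r_n ≥ p* and c = 0 otherwise. Then ν_p(C(m+n, m)_F) = c·ν_p(F_{p*}) + (the number of indices i ≥ 0 such that (q_m mod p^{i+1}) + (q_n mod p^{i+1}) + c ≥ p^{i+1}), i.e., the number of carries that occur to the left of the radix point when m/p* is added to n/p* in p-ary notation, plus ν_p(F_{p*}) if a carry occurs across the radix point. -/

import Mathlib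

/-- The fibotorial `n!_F = F_n · F_{n-1} ⋯ F_1`, with `0!_F = 1`. -/
def fibotorial (n : ℕ) : ℕ := ∏ i ∈ Finset.range n, Nat.fib (i + 1)

/-- The fibonomial coefficient `C(n,k)_F = n!_F / (k!_F · (n-k)!_F)` for `k ≤ n`,
and `0` otherwise. -/
def fibnomial (n k : ℕ) : ℕ :=
  if k ≤ n then fibotorial n / (fibotorial k * fibotorial (n - k)) else 0

/-- `p*`, the least positive integer `t` such that `p ∣ F_t` (the Fibonacci entry point). -/
noncomputable def fibEntry (p : ℕ) : ℕ := sInf {t : ℕ | 0 < t ∧ p ∣ Nat.fib t}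


/-!
For `p ≠ 0` the divisibility `p ∣ F_n` holds exactly when `p* ∣ n`, and for odd `p` the identity
`F_{tk} = ∑ C(k,i) F_t^i F_{t-1}^{k-i} F_i` gives the lifting-the-exponent law
`ν_p(F_{p* k}) = ν_p(F_{p*}) + ν_p(k)`. Hence `ν_p(N!_F) = ⌊N/p*⌋ ν_p(F_{p*}) + ν_p(⌊N/p*⌋!)`.
In `ν_p((m+n)!_F) - ν_p(m!_F) - ν_p(n!_F)` the first terms leave `c ν_p(F_{p*})`, since
`⌊(m+n)/p*⌋ = ⌊m/p*⌋ + ⌊n/p*⌋ + c`, and the factorials leave the number of carries, by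
Legendre's formula as in Kummer's theorem.
-/

open Nat Finset Real
open scoped goldenRatio

theorem fib_matrix_pow_succ {R : Type*} [Semiring R] (n : ℕ) :
    (!![1, 1; 1, 0] : Matrix (Fin 2) (Fin 2) R) ^ (n + 1) =
      !![(fib (n + 2) : R), fib (n + 1); fib (n + 1), fib n] := by
  induction n with
  | zero => ext i j; fin_cases i <;> fin_cases j <;> simp
  | succ n ih =>
    rw [pow_succ, ih]
    ext i j; fin_cases i <;> fin_cases j <;> simp [fib_add_two] <;> abel

/-- The Fibonacci matrix is a unit of the finite ring of `2 × 2` matrices over `ZMod p`, so some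
power `n` of it is `1`, whose off-diagonal entry is `F_n`. -/
theorem exists_dvd_fib {p : ℕ} (hp : p ≠ 0) : ∃ n, 0 < n ∧ p ∣ fib n := by
  have : NeZero p := ⟨hp⟩
  have hunit : IsUnit (!![1, 1; 1, 0] : Matrix (Fin 2) (Fin 2) (ZMod p)) := by
    simp [Matrix.isUnit_iff_isUnit_det, Matrix.det_fin_two_of]
  obtain ⟨n, hn, hpow⟩ := (isOfFinOrder_of_finite hunit.unit).exists_pow_eq_one
  obtain ⟨n, rfl⟩ := Nat.exists_eq_add_one_of_ne_zero hn.ne'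
  refine ⟨n + 1, n.succ_pos, (ZMod.natCast_eq_zero_iff _ _).1 ?_⟩
  have h01 := congrArg (fun u : (Matrix (Fin 2) (Fin 2) (ZMod p))ˣ =>
    (u : Matrix (Fin 2) (Fin 2) (ZMod p)) 0 1) hpow
  simpa [fib_matrix_pow_succ] using h01

theorem fibEntry_spec {p : ℕ} (hp : p ≠ 0) : 0 < fibEntry p ∧ p ∣ fib (fibEntry p) :=
  Nat.sInf_mem (exists_dvd_fib hp)

theorem dvd_fib_iff_fibEntry_dvd {p : ℕ} (hp : p ≠ 0) (n : ℕ) :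
    p ∣ fib n ↔ fibEntry p ∣ n := by
  obtain ⟨hpos, hdvd⟩ := fibEntry_spec hp
  refine ⟨fun h => ?_, fun h => hdvd.trans (fib_dvd _ _ h)⟩
  rcases n.eq_zero_or_pos with rfl | hn
  · exact dvd_zero _
  have hgcd : p ∣ fib (n.gcd (fibEntry p)) := by rw [fib_gcd]; exact Nat.dvd_gcd h hdvd
  have hle : fibEntry p ≤ n.gcd (fibEntry p) :=
    Nat.sInf_le ⟨Nat.gcd_pos_of_pos_left _ hn, hgcd⟩
  rw [← Nat.le_antisymm (Nat.le_of_dvd hpos (Nat.gcd_dvd_right _ _)) hle]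
  exact Nat.gcd_dvd_left _ _

/-- From `φ ^ t = F_t φ + F_{t-1}` and Binet's formula. -/
theorem fib_mul_eq_sum {t : ℕ} (ht : 0 < t) (k : ℕ) :
    fib (t * k) =
      ∑ i ∈ range (k + 1), k.choose i * fib t ^ i * fib (t - 1) ^ (k - i) * fib i := by
  obtain ⟨s, rfl⟩ := Nat.exists_eq_add_one_of_ne_zero ht.ne'
  have hpow : ∀ x : ℝ, x * fib (s + 1) + fib s = x ^ (s + 1) → x ^ ((s + 1) * k) =
      ∑ i ∈ range (k + 1), (k.choose i * fib (s + 1) ^ i * fib s ^ (k - i) : ℝ) * x ^ i := by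
    intro x hx
    rw [pow_mul, ← hx, add_pow]
    exact sum_congr rfl fun i _ => by ring
  apply Nat.cast_injective (R := ℝ)
  push_cast
  rw [coe_fib_eq, hpow φ (goldenRatio_mul_fib_succ_add_fib s),
    hpow ψ (goldenConj_mul_fib_succ_add_fib s), ← sum_sub_distrib, sum_div]
  refine sum_congr rfl fun i _ => ?_
  rw [coe_fib_eq i]
  ring

def fibMulTail (t k : ℕ) : ℕ :=
  ∑ i ∈ range (k - 1), k.choose (i + 2) * fib t ^ i * fib (t - 1) ^ (k - 2 - i) * fib (i + 2)

theorem fib_mul_eq {t k : ℕ} (ht : 0 < t) (hk : 0 < k) :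
    fib (t * k) = fib t * (k * fib (t - 1) ^ (k - 1) + fib t * fibMulTail t k) := by
  obtain ⟨k, rfl⟩ := Nat.exists_eq_add_one_of_ne_zero hk.ne'
  rw [fib_mul_eq_sum ht, sum_range_succ', sum_range_succ', fibMulTail, mul_add, mul_sum,
    mul_sum, add_assoc, add_comm]
  simp only [Nat.add_sub_cancel, fib_zero, mul_zero, add_zero]
  congr 1
  · simp only [zero_add, choose_one_right, pow_one, fib_one, mul_one]
    ring
  · refine sum_congr rfl fun i _ => ?_
    rw [show k + 1 - (i + 1 + 1) = k + 1 - 2 - i by omega]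
    ring

section Valuation

variable {p t : ℕ} [hp : Fact p.Prime]

theorem dvd_fibMulTail (hodd : Odd p) (h : p ∣ fib t) : p ∣ fibMulTail t p := by
  have hp3 : 3 ≤ p := by
    have := hp.out.two_le
    rcases hodd with ⟨r, rfl⟩
    omega
  refine dvd_sum fun i hi => ?_
  rcases Nat.lt_or_ge (i + 2) p with hlt | hge
  · exact (((hp.out.dvd_choose_self (by omega) hlt).mul_right _).mul_right _).mul_right _
  · exact (((dvd_pow h (by simp at hi; omega)).mul_left _).mul_right _).mul_right _

theorem not_dvd_fib_sub_one (ht : 0 < t) (h : p ∣ fib t) : ¬ p ∣ fib (t - 1) := fun h' =>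
  hp.out.one_lt.ne' <| Nat.Coprime.eq_one_of_dvd
    (Nat.Coprime.coprime_dvd_left h' (Nat.sub_add_cancel ht ▸ fib_coprime_fib_succ (t - 1))) h

theorem padicValNat_fib_mul_of_not_dvd (ht : 0 < t) (h : p ∣ fib t) {k : ℕ} (hk : ¬ p ∣ k) :
    padicValNat p (fib (t * k)) = padicValNat p (fib t) := by
  have hk0 : 0 < k := Nat.pos_of_ne_zero (by rintro rfl; exact hk (dvd_zero p))
  set E := k * fib (t - 1) ^ (k - 1) + fib t * fibMulTail t k
  have hE : ¬ p ∣ E := by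
    rw [Nat.dvd_add_left (h.mul_right _), hp.out.dvd_mul]
    exact not_or.2 ⟨hk, fun h' => not_dvd_fib_sub_one ht h (hp.out.dvd_of_dvd_pow h')⟩
  have hE0 : E ≠ 0 := fun h0 => hE (h0 ▸ dvd_zero p)
  rw [fib_mul_eq ht hk0, padicValNat.mul (fib_pos.2 ht).ne' hE0,
    padicValNat.eq_zero_of_not_dvd hE, add_zero]

theorem padicValNat_fib_mul_prime (hodd : Odd p) (ht : 0 < t) (h : p ∣ fib t) :
    padicValNat p (fib (t * p)) = padicValNat p (fib t) + 1 := by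
  set E := p * fib (t - 1) ^ (p - 1) + fib t * fibMulTail t p
  have hsq : p ^ 2 ∣ fib t * fibMulTail t p :=
    sq p ▸ mul_dvd_mul h (dvd_fibMulTail hodd h)
  have hE : p ∣ E := dvd_add (dvd_mul_right _ _) (h.mul_right _)
  have hE2 : ¬ p ^ 2 ∣ E := by
    rw [Nat.dvd_add_left hsq, sq, Nat.mul_dvd_mul_iff_left hp.out.pos]
    exact fun h' => not_dvd_fib_sub_one ht h (hp.out.dvd_of_dvd_pow h')
  have hE0 : E ≠ 0 := fun h0 => hE2 (h0 ▸ dvd_zero (p ^ 2))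
  have hvE : padicValNat p E = 1 := by
    rw [padicValNat_dvd_iff_le hE0] at hE2
    have := one_le_padicValNat_of_dvd hE0 hE
    omega
  rw [fib_mul_eq ht hp.out.pos, padicValNat.mul (fib_pos.2 ht).ne' hE0, hvE]

theorem padicValNat_fib_mul (hodd : Odd p) (ht : 0 < t) (h : p ∣ fib t) {k : ℕ} (hk : k ≠ 0) :
    padicValNat p (fib (t * k)) = padicValNat p (fib t) + padicValNat p k := by
  induction k using Nat.strong_induction_on with
  | _ k ih =>
    by_cases hpk : p ∣ k
    · obtain ⟨j, rfl⟩ := hpk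
      have hj : j ≠ 0 := right_ne_zero_of_mul hk
      have hj' : j < p * j := lt_mul_left (Nat.pos_of_ne_zero hj) hp.out.one_lt
      rw [show t * (p * j) = t * j * p by ring,
        padicValNat_fib_mul_prime hodd (Nat.mul_pos ht (Nat.pos_of_ne_zero hj))
          (h.trans (fib_dvd _ _ (dvd_mul_right _ _))),
        ih j hj' hj, padicValNat.mul hp.out.ne_zero hj, padicValNat_self]
      ring
    · rw [padicValNat_fib_mul_of_not_dvd ht h hpk, padicValNat.eq_zero_of_not_dvd hpk, add_zero]

end Valuation

theorem fibotorial_succ (n : ℕ) : fibotorial (n + 1) = fibotorial n * fib (n + 1) :=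
  prod_range_succ _ _

theorem fibotorial_ne_zero (n : ℕ) : fibotorial n ≠ 0 :=
  prod_ne_zero_iff.2 fun i _ => (fib_pos.2 i.succ_pos).ne'

/-- The Fibonacci analogue of Pascal's rule, from `F_{m+n+2} = F_m F_{n+1} + F_{m+1} F_{n+2}`. -/
theorem fibotorial_mul_fibotorial_dvd : ∀ m n : ℕ, fibotorial m * fibotorial n ∣ fibotorial (m + n)
  | 0, n => by simp [fibotorial]
  | m + 1, 0 => by simp [fibotorial]
  | m + 1, n + 1 => by
    have hleft := fibotorial_mul_fibotorial_dvd m (n + 1)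
    have hright := fibotorial_mul_fibotorial_dvd (m + 1) n
    rw [← add_assoc] at hleft
    rw [add_right_comm] at hright
    have hsplit : fibotorial (m + 1 + (n + 1)) =
        fibotorial (m + n + 1) * (fib m * fib (n + 1) + fib (m + 1) * fib (n + 1 + 1)) := by
      rw [show m + 1 + (n + 1) = m + n + 1 + 1 by ring, fibotorial_succ,
        show m + n + 1 + 1 = m + (n + 1) + 1 by ring, fib_add]
    rw [hsplit, mul_add]
    refine dvd_add ?_ ?_
    · calc fibotorial (m + 1) * fibotorial (n + 1)
          = fibotorial (m + 1) * fibotorial n * fib (n + 1) := by rw [fibotorial_succ n, mul_assoc]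
        _ ∣ fibotorial (m + n + 1) * fib (n + 1) := mul_dvd_mul_right hright _
        _ ∣ fibotorial (m + n + 1) * (fib m * fib (n + 1)) := Dvd.intro (fib m) (by ring)
    · calc fibotorial (m + 1) * fibotorial (n + 1)
          = fibotorial m * fibotorial (n + 1) * fib (m + 1) := by rw [fibotorial_succ m]; ring
        _ ∣ fibotorial (m + n + 1) * fib (m + 1) := mul_dvd_mul_right hleft _
        _ ∣ fibotorial (m + n + 1) * (fib (m + 1) * fib (n + 1 + 1)) :=
          Dvd.intro (fib (n + 1 + 1)) (by ring)
termination_by m n => m + n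

theorem padicValNat_fibotorial {p : ℕ} [hp : Fact p.Prime] (hodd : Odd p) (N : ℕ) :
    padicValNat p (fibotorial N) =
      N / fibEntry p * padicValNat p (fib (fibEntry p)) + padicValNat p (N / fibEntry p)! := by
  obtain ⟨ht, hdvd⟩ := fibEntry_spec hp.out.ne_zero
  induction N with
  | zero => simp [fibotorial]
  | succ N ih =>
    rw [fibotorial_succ, padicValNat.mul (fibotorial_ne_zero N) (by simp), ih]
    by_cases hN : fibEntry p ∣ N + 1
    · obtain ⟨j, hj⟩ := hN
      have hq : N / fibEntry p + 1 = j := by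
        rw [← Nat.succ_div_of_dvd ⟨j, hj⟩, hj, Nat.mul_div_cancel_left j ht]
      rw [Nat.succ_div_of_dvd ⟨j, hj⟩, hj,
        padicValNat_fib_mul hodd ht hdvd (by rintro rfl; simp at hj), ← hq,
        factorial_succ, padicValNat.mul (succ_ne_zero _) (factorial_ne_zero _)]
      ring
    · rw [Nat.succ_div_of_not_dvd hN,
        padicValNat.eq_zero_of_not_dvd ((dvd_fib_iff_fibEntry_dvd hp.out.ne_zero _).not.2 hN),
        add_zero]

theorem add_add_div_of_le_one {a b c d : ℕ} (hd : 0 < d) (hc : c ≤ 1) :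
    (a + b + c) / d = a / d + b / d + if d ≤ a % d + b % d + c then 1 else 0 := by
  have hsplit : a + b + c = (a % d + b % d + c) + d * (a / d + b / d) := by
    have := Nat.div_add_mod a d
    have := Nat.div_add_mod b d
    linarith
  have := Nat.mod_lt a hd
  have := Nat.mod_lt b hd
  rw [hsplit, Nat.add_mul_div_left _ _ hd]
  split_ifs with h
  · rw [Nat.div_eq_of_lt_le (k := 1) (by omega) (by omega)]
    ring
  · rw [Nat.div_eq_of_lt (by omega)]
    ring

/-- Kummer's theorem with an incoming carry `c`: by Legendre's formula, each carry at the digit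
`p ^ (i + 1)` adds one to `⌊(a + b + c) / p ^ (i + 1)⌋`. -/
theorem padicValNat_factorial_add_add (p : ℕ) [hp : Fact p.Prime] {a b c : ℕ} (hc : c ≤ 1) :
    padicValNat p (a + b + c)! = padicValNat p a ! + padicValNat p b ! +
      {i : ℕ | p ^ (i + 1) ≤ a % p ^ (i + 1) + b % p ^ (i + 1) + c}.ncard := by
  set B := a + b + c
  have hlog : ∀ x ≤ B, log p x < B + 1 := fun x hx => (Nat.log_le_self p x).trans_lt (by omega)
  have hcarries : {i : ℕ | p ^ (i + 1) ≤ a % p ^ (i + 1) + b % p ^ (i + 1) + c} =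
      ↑({i ∈ range B | p ^ (i + 1) ≤ a % p ^ (i + 1) + b % p ^ (i + 1) + c}) := by
    ext i
    simp only [Set.mem_ofPred_eq, coe_filter, mem_range]
    refine ⟨fun h => ⟨?_, h⟩, And.right⟩
    have := Nat.lt_pow_self (n := i + 1) hp.out.one_lt
    have := Nat.mod_le a (p ^ (i + 1))
    have := Nat.mod_le b (p ^ (i + 1))
    omega
  rw [padicValNat_factorial (hlog B le_rfl), padicValNat_factorial (hlog a (by omega)),
    padicValNat_factorial (hlog b (by omega)), hcarries, Set.ncard_coe_finset, card_filter,
    sum_Ico_eq_sum_range, sum_Ico_eq_sum_range, sum_Ico_eq_sum_range, Nat.add_sub_cancel,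
    ← sum_add_distrib, ← sum_add_distrib]
  refine sum_congr rfl fun i _ => ?_
  rw [add_comm 1 i]
  exact add_add_div_of_le_one (pow_pos hp.out.pos _) hc

/-- Knuth–Wilf: the `p`-adic valuation of `C(m+n, m)_F` equals the number of carries
to the left of the radix point when `m/p*` is added to `n/p*` in base `p`, plus
`ν_p(F_{p*})` if a carry occurs across the radix point. -/
theorem knuth_wilf (p : ℕ) (hp : p.Prime) (hodd : Odd p) (m n : ℕ) :
    padicValNat p (fibnomial (m + n) m) =
      (if fibEntry p ≤ m % fibEntry p + n % fibEntry p then 1 else 0) *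
          padicValNat p (Nat.fib (fibEntry p)) +
        Set.ncard {i : ℕ |
          p ^ (i + 1) ≤ m / fibEntry p % p ^ (i + 1) + n / fibEntry p % p ^ (i + 1) +
            (if fibEntry p ≤ m % fibEntry p + n % fibEntry p then 1 else 0)} := by
  have : Fact p.Prime := ⟨hp⟩
  have ht := (fibEntry_spec hp.ne_zero).1
  have hc : (if fibEntry p ≤ m % fibEntry p + n % fibEntry p then 1 else 0) ≤ 1 := by
    split_ifs <;> omega
  rw [fibnomial, if_pos (le_add_right m n), Nat.add_sub_cancel_left,
    padicValNat.div_of_dvd (fibotorial_mul_fibotorial_dvd m n),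
    padicValNat.mul (fibotorial_ne_zero m) (fibotorial_ne_zero n),
    padicValNat_fibotorial hodd, padicValNat_fibotorial hodd, padicValNat_fibotorial hodd,
    Nat.add_div ht, padicValNat_factorial_add_add p hc, add_mul, add_mul]
  omega
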